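/- arXiv:1907.06790 — 3 statements merged into one kernel-verified Lean document; each statement's English description precedes it below -/
import Mathlib

section
/- There is no continuous map M : SO(3) → SO(3) such that for every g ∈ SO(3): (i) M(g) ∈ Ω(g), and (ii) M(h·g) = M(g) for every h ∈ R_Y. In other words, no continuous scheme can select a representative element from every orbit of SO(3) under rotations about the Y-axis. -/
open Matrix RealInnerProductSpace

noncomputable section

/-- Euclidean 3-space. -/
abbrev E3 := EuclideanSpace ℝ (Fin 3)

/-- The special orthogonal group SO(3): the subgroup of the real orthogonal group
(3×3 real matrices whose transpose is their inverse) consisting of matrices of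
determinant 1. -/
def SO3 : Subgroup (Matrix.unitaryGroup (Fin 3) ℝ) where
  carrier := {A | (A : Matrix (Fin 3) (Fin 3) ℝ).det = 1}
  one_mem' := by simp
  mul_mem' := by
    intro a b ha hb
    simp only [Set.mem_setOf_eq, Submonoid.coe_mul, Matrix.det_mul] at *
    rw [ha, hb, mul_one]
  inv_mem' := by
    intro a ha
    simp only [Set.mem_setOf_eq] at *
    have h : ((a⁻¹ : Matrix.unitaryGroup (Fin 3) ℝ) : Matrix (Fin 3) (Fin 3) ℝ)
        = star (a : Matrix (Fin 3) (Fin 3) ℝ) := rfl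
    rw [h, Matrix.star_eq_conjTranspose, Matrix.det_conjTranspose]
    simp [ha]

/-- The action of an element of SO(3) on Euclidean 3-space, by matrix-vector
multiplication. -/
def act (g : SO3) (v : E3) : E3 :=
  (EuclideanSpace.equiv (Fin 3) ℝ).symm
    (((g : Matrix.unitaryGroup (Fin 3) ℝ) : Matrix (Fin 3) (Fin 3) ℝ).mulVec
      (EuclideanSpace.equiv (Fin 3) ℝ v))

/-- The north pole p = (0,1,0). -/
def pY : E3 := (EuclideanSpace.equiv (Fin 3) ℝ).symm ![0, 1, 0]

/-- The tangent vector t = (1,0,0). -/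
def tX : E3 := (EuclideanSpace.equiv (Fin 3) ℝ).symm ![1, 0, 0]

/-- The set R_Y of rotations about the Y axis, i.e. elements of SO(3) fixing p = (0,1,0). -/
def RY : Set SO3 := {h | act h pY = pY}

/-- The orbit Ω(g) of g under left multiplication by rotations about the Y axis. -/
def orbit (g : SO3) : Set SO3 := {g' | ∃ h ∈ RY, g' = h * g}

/-- The unit 2-sphere in Euclidean 3-space. -/
def S2 := {q : E3 // ‖q‖ = 1}

instance : TopologicalSpace S2 := instTopologicalSpaceSubtype

instance : CoeOut S2 E3 := ⟨Subtype.val⟩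

/-! ### Auxiliary material for the proof -/

/-- The rotation matrix associated to the unit quaternion `a + b·j`
(`ℍ = ℂ ⊕ ℂj`), with coordinate axes permuted so that the circle subgroup
`{(λ, 0)}` is carried to rotations about the Y axis (index `1`). -/
def psiMat (a b : ℂ) : Matrix (Fin 3) (Fin 3) ℝ :=
  ![![1 - 2*(a.im^2+b.im^2), 2*(a.im*b.re+a.re*b.im), 2*(b.re*b.im-a.re*a.im)],
    ![2*(a.im*b.re-a.re*b.im), 1 - 2*(b.re^2+b.im^2), 2*(a.im*b.im+a.re*b.re)],
    ![2*(b.re*b.im+a.re*a.im), 2*(a.im*b.im-a.re*b.re), 1 - 2*(a.im^2+b.re^2)]]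

lemma norm_hyp {a b : ℂ} (h : Complex.normSq a + Complex.normSq b = 1) :
    a.re^2 + a.im^2 + b.re^2 + b.im^2 = 1 := by
  rw [Complex.normSq_apply, Complex.normSq_apply] at h; linear_combination h

lemma psiMat_unitary (a b : ℂ) (h : Complex.normSq a + Complex.normSq b = 1) :
    psiMat a b ∈ Matrix.unitaryGroup (Fin 3) ℝ := by
  have hZ := norm_hyp h
  rw [Matrix.mem_unitaryGroup_iff]
  ext i j
  fin_cases i <;> fin_cases j <;>
    simp only [Matrix.mul_apply, Fin.sum_univ_three, Matrix.star_apply, Matrix.one_apply] <;>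
    simp [psiMat, Matrix.mul_apply, Fin.sum_univ_three, Matrix.one_apply, Matrix.star_apply]
  · linear_combination (4*a.im^2 + 4*b.im^2) * hZ
  · linear_combination (-4*a.im*b.re) * hZ
  · linear_combination (-4*b.re*b.im) * hZ
  · linear_combination (-4*a.im*b.re) * hZ
  · linear_combination (4*b.re^2 + 4*b.im^2) * hZ
  · linear_combination (-4*a.im*b.im) * hZ
  · linear_combination (-4*b.re*b.im) * hZ
  · linear_combination (-4*a.im*b.im) * hZ
  · linear_combination (4*a.im^2 + 4*b.re^2) * hZ

lemma psiMat_det (a b : ℂ) (h : Complex.normSq a + Complex.normSq b = 1) :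
    (psiMat a b).det = 1 := by
  have hZ := norm_hyp h
  rw [Matrix.det_fin_three]
  simp [psiMat]
  linear_combination (4*a.im^2 + 4*b.re^2 + 4*b.im^2) * hZ

lemma mem_SO3_iff (x : Matrix.unitaryGroup (Fin 3) ℝ) :
    x ∈ SO3 ↔ ((x : Matrix (Fin 3) (Fin 3) ℝ).det = 1) := Iff.rfl

/-- The unit sphere S³ inside ℂ². -/
abbrev Sph := {z : ℂ × ℂ // Complex.normSq z.1 + Complex.normSq z.2 = 1}

/-- The double cover S³ → SO(3). -/
def psiS (z : Sph) : SO3 :=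
  ⟨⟨psiMat z.1.1 z.1.2, psiMat_unitary _ _ z.2⟩, psiMat_det _ _ z.2⟩

lemma psiS_mat (z : Sph) :
    ((psiS z : Matrix.unitaryGroup (Fin 3) ℝ) : Matrix (Fin 3) (Fin 3) ℝ)
      = psiMat z.1.1 z.1.2 := rfl

/-- Multiplicativity of `psiMat` with respect to left multiplication by a unit complex
scalar. -/
lemma psiMat_mul (lam a b : ℂ) (hl : Complex.normSq lam = 1)
    (h : Complex.normSq a + Complex.normSq b = 1) :
    psiMat (lam*a) (lam*b) = psiMat lam 0 * psiMat a b := by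
  have hZ := norm_hyp h
  have hL : lam.re^2 + lam.im^2 = 1 := by
    rw [Complex.normSq_apply] at hl; linear_combination hl
  ext i j
  fin_cases i <;> fin_cases j <;>
    simp only [Matrix.mul_apply, Fin.sum_univ_three] <;>
    simp [psiMat, Matrix.mul_apply, Fin.sum_univ_three, Complex.mul_re, Complex.mul_im]
  · linear_combination (-2*a.im^2 - 2*b.im^2) * hL + (-2*lam.im^2) * hZ
  · linear_combination (2*a.re*b.im + 2*a.im*b.re) * hL
  · linear_combination (-2*a.re*a.im + 2*b.re*b.im) * hL + (-2*lam.re*lam.im) * hZ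
  · linear_combination (-a.re*b.im + a.im*b.re) * hL
  · linear_combination (b.re^2 + b.im^2) * hL
  · linear_combination (a.re*b.re + a.im*b.im) * hL
  · linear_combination (2*a.re*a.im + 2*b.re*b.im) * hL + (2*lam.re*lam.im) * hZ
  · linear_combination (-2*a.re*b.re + 2*a.im*b.im) * hL
  · linear_combination (-2*a.im^2 - 2*b.re^2) * hL + (-2*lam.im^2) * hZ

lemma act_eq_iff (g : SO3) (v w : Fin 3 → ℝ) :
    act g ((EuclideanSpace.equiv (Fin 3) ℝ).symm v) = (EuclideanSpace.equiv (Fin 3) ℝ).symm w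
      ↔ ((g : Matrix.unitaryGroup (Fin 3) ℝ) : Matrix (Fin 3) (Fin 3) ℝ).mulVec v = w := by
  unfold act
  rw [ContinuousLinearEquiv.apply_symm_apply]
  exact (EuclideanSpace.equiv (Fin 3) ℝ).symm.injective.eq_iff

/-- Description of the matrices of elements of `RY`. -/
lemma RY_struct (h : SO3) (hRY : h ∈ RY) :
    ∃ c s : ℝ, c^2 + s^2 = 1 ∧
      ((h : Matrix.unitaryGroup (Fin 3) ℝ) : Matrix (Fin 3) (Fin 3) ℝ)
        = ![![c, 0, -s], ![0, 1, 0], ![s, 0, c]] := by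
  set A := ((h : Matrix.unitaryGroup (Fin 3) ℝ) : Matrix (Fin 3) (Fin 3) ℝ) with hA
  have hfix : A.mulVec ![0, 1, 0] = ![0, 1, 0] := by
    have := hRY
    rw [RY, Set.mem_setOf_eq, pY, act_eq_iff] at this
    exact this
  have h01 : A 0 1 = 0 := by
    have := congr_fun hfix 0
    simpa [Matrix.mulVec, dotProduct, Fin.sum_univ_three] using this
  have h11 : A 1 1 = 1 := by
    have := congr_fun hfix 1
    simpa [Matrix.mulVec, dotProduct, Fin.sum_univ_three] using this
  have h21 : A 2 1 = 0 := by
    have := congr_fun hfix 2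
    simpa [Matrix.mulVec, dotProduct, Fin.sum_univ_three] using this
  have hU : A * star A = 1 := by
    have := (h : Matrix.unitaryGroup (Fin 3) ℝ).prop
    rw [Matrix.mem_unitaryGroup_iff] at this
    exact this
  have hU' : star A * A = 1 := by
    have := (h : Matrix.unitaryGroup (Fin 3) ℝ).prop
    rw [Matrix.mem_unitaryGroup_iff'] at this
    exact this
  have row1 : A 1 0 ^ 2 + A 1 1 ^ 2 + A 1 2 ^ 2 = 1 := by
    have := congr_fun (congr_fun hU 1) 1
    simp [Matrix.mul_apply, Fin.sum_univ_three, Matrix.star_apply, Matrix.one_apply] at this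
    linear_combination this
  have h10 : A 1 0 = 0 := by nlinarith [sq_nonneg (A 1 0), sq_nonneg (A 1 2)]
  have h12 : A 1 2 = 0 := by nlinarith [sq_nonneg (A 1 0), sq_nonneg (A 1 2)]
  have col0 : A 0 0 ^ 2 + A 2 0 ^ 2 = 1 := by
    have := congr_fun (congr_fun hU' 0) 0
    simp [Matrix.mul_apply, Fin.sum_univ_three, Matrix.star_apply, Matrix.one_apply, h10] at this
    linear_combination this
  have col2 : A 0 2 ^ 2 + A 2 2 ^ 2 = 1 := by
    have := congr_fun (congr_fun hU' 2) 2
    simp [Matrix.mul_apply, Fin.sum_univ_three, Matrix.star_apply, Matrix.one_apply, h12] at this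
    linear_combination this
  have col02 : A 0 0 * A 0 2 + A 2 0 * A 2 2 = 0 := by
    have := congr_fun (congr_fun hU' 0) 2
    simp [Matrix.mul_apply, Fin.sum_univ_three, Matrix.star_apply, Matrix.one_apply, h10, h12]
      at this
    linear_combination this
  have hdet : A 0 0 * A 2 2 - A 0 2 * A 2 0 = 1 := by
    have := h.prop
    rw [mem_SO3_iff, ← hA, Matrix.det_fin_three] at this
    rw [h01, h11, h21, h10, h12] at this
    linear_combination this
  have key : (A 0 0 - A 2 2)^2 + (A 0 2 + A 2 0)^2 = 0 := by
    linear_combination col0 + col2 - 2 * hdet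
  have h22 : A 2 2 = A 0 0 := by nlinarith [sq_nonneg (A 0 0 - A 2 2), sq_nonneg (A 0 2 + A 2 0)]
  have h02 : A 0 2 = -(A 2 0) := by
    nlinarith [sq_nonneg (A 0 0 - A 2 2), sq_nonneg (A 0 2 + A 2 0)]
  refine ⟨A 0 0, A 2 0, col0, ?_⟩
  ext i j
  fin_cases i <;> fin_cases j <;>
    simp [h01, h11, h21, h10, h12, h22, h02]

/- rho lam is in SO3 for unit lam, and in RY -/
lemma rho_mem_RY (lam : ℂ) (hl : Complex.normSq lam = 1) :
    (psiS ⟨(lam, 0), by simp [hl]⟩) ∈ RY := by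
  rw [RY, Set.mem_setOf_eq, pY, act_eq_iff]
  funext i
  fin_cases i <;>
    simp [psiS_mat, psiMat, Matrix.mulVec, dotProduct, Fin.sum_univ_three]

section withM

variable (M : SO3 → SO3)

/-- The "difference" matrix `M(ψ z) · (ψ z)⁻¹`. -/
def NMat (z : Sph) : Matrix (Fin 3) (Fin 3) ℝ :=
  ((M (psiS z) : Matrix.unitaryGroup (Fin 3) ℝ) : Matrix (Fin 3) (Fin 3) ℝ)
    * star ((psiS z : Matrix.unitaryGroup (Fin 3) ℝ) : Matrix (Fin 3) (Fin 3) ℝ)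

/-- The circle-valued classifying function. -/
def fS (z : Sph) : ℂ := (NMat M z 0 0 : ℂ) + (NMat M z 2 0 : ℂ) * Complex.I

variable (horb : ∀ g : SO3, M g ∈ orbit g)
    (hinv : ∀ (g h : SO3), h ∈ RY → M (h * g) = M g)

include horb in
lemma NMat_struct (z : Sph) : ∃ c s : ℝ, c^2 + s^2 = 1 ∧
    NMat M z = ![![c, 0, -s], ![0, 1, 0], ![s, 0, c]] := by
  obtain ⟨hh, hhRY, hEq⟩ := horb (psiS z)
  obtain ⟨c, s, hcs, hm⟩ := RY_struct hh hhRY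
  refine ⟨c, s, hcs, ?_⟩
  have hcoe : ((M (psiS z) : Matrix.unitaryGroup (Fin 3) ℝ) : Matrix (Fin 3) (Fin 3) ℝ)
      = ((hh : Matrix.unitaryGroup (Fin 3) ℝ) : Matrix (Fin 3) (Fin 3) ℝ)
        * ((psiS z : Matrix.unitaryGroup (Fin 3) ℝ) : Matrix (Fin 3) (Fin 3) ℝ) := by
    rw [hEq]; rfl
  have hself : ((psiS z : Matrix.unitaryGroup (Fin 3) ℝ) : Matrix (Fin 3) (Fin 3) ℝ)
      * star ((psiS z : Matrix.unitaryGroup (Fin 3) ℝ) : Matrix (Fin 3) (Fin 3) ℝ) = 1 := by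
    have := (psiS z : Matrix.unitaryGroup (Fin 3) ℝ).prop
    rw [Matrix.mem_unitaryGroup_iff] at this
    exact this
  rw [NMat, hcoe, mul_assoc, hself, mul_one, hm]

include horb in
lemma fS_abs (z : Sph) : ‖fS M z‖ = 1 := by
  obtain ⟨c, s, hcs, hmat⟩ := NMat_struct M horb z
  rw [Complex.norm_def]
  have hn : Complex.normSq (fS M z) = 1 := by
    rw [fS, hmat]
    simp [Complex.normSq_apply]
    linear_combination hcs
  rw [hn]; exact Real.sqrt_one

include horb hinv in
lemma fS_equiv (z z' : Sph) (lam : ℂ) (hl : Complex.normSq lam = 1)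
    (h1 : z'.1.1 = lam * z.1.1) (h2 : z'.1.2 = lam * z.1.2) :
    fS M z' = fS M z * (starRingEnd ℂ lam)^2 := by
  have hL : lam.re^2 + lam.im^2 = 1 := by
    rw [Complex.normSq_apply] at hl; linear_combination hl
  have hpsi : psiS z' = psiS ⟨(lam, 0), by simp [hl]⟩ * psiS z := by
    apply Subtype.ext; apply Subtype.ext
    show psiMat z'.1.1 z'.1.2 = psiMat lam 0 * psiMat z.1.1 z.1.2
    rw [h1, h2]; exact psiMat_mul lam _ _ hl z.2
  have hMeq : M (psiS z') = M (psiS z) := by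
    rw [hpsi]; exact hinv _ _ (rho_mem_RY lam hl)
  have hN : NMat M z' = NMat M z * star (psiMat lam 0) := by
    rw [NMat, NMat, hMeq, psiS_mat, psiS_mat, h1, h2, psiMat_mul lam _ _ hl z.2, Matrix.star_mul,
      ← mul_assoc]
  obtain ⟨c, s, hcs, hm⟩ := NMat_struct M horb z
  rw [fS, fS, hN]
  simp only [Matrix.mul_apply, Fin.sum_univ_three, Matrix.star_apply]
  rw [hm]
  apply Complex.ext <;>
    simp [Matrix.mul_apply, Fin.sum_univ_three, Matrix.star_apply, psiMat, Complex.mul_re,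
      Complex.mul_im, pow_two]
  · linear_combination (-c) * hL
  · linear_combination (-s) * hL

variable (hMc : Continuous M)

include hMc in
lemma fS_cont : Continuous (fS M) := by
  have hpsiM : Continuous (fun z : Sph => psiMat z.1.1 z.1.2) := by
    apply continuous_matrix
    intro i j
    fin_cases i <;> fin_cases j <;> simp [psiMat] <;> fun_prop
  have hpsiS : Continuous psiS :=
    Continuous.subtype_mk (Continuous.subtype_mk hpsiM _) _
  have hMm : Continuous fun z : Sph =>
      ((M (psiS z) : Matrix.unitaryGroup (Fin 3) ℝ) : Matrix (Fin 3) (Fin 3) ℝ) :=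
    continuous_subtype_val.comp (continuous_subtype_val.comp (hMc.comp hpsiS))
  have hNij : ∀ i j, Continuous fun z : Sph => NMat M z i j := by
    intro i j
    have hrw : (fun z : Sph => NMat M z i j)
        = fun z : Sph => ∑ k : Fin 3,
            ((M (psiS z) : Matrix.unitaryGroup (Fin 3) ℝ) : Matrix (Fin 3) (Fin 3) ℝ) i k
              * psiMat z.1.1 z.1.2 j k := by
      funext z
      rw [NMat, Matrix.mul_apply]
      refine Finset.sum_congr rfl fun k _ => ?_
      rw [psiS_mat, Matrix.star_apply, star_trivial]
    rw [hrw]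
    exact continuous_finset_sum _ fun k _ =>
      (((continuous_apply k).comp ((continuous_apply i).comp hMm)).mul
        ((continuous_apply k).comp ((continuous_apply j).comp hpsiM)))
  exact (Complex.continuous_ofReal.comp (hNij 0 0)).add
    ((Complex.continuous_ofReal.comp (hNij 2 0)).mul continuous_const)

end withM

/-- The key topological fact: there is no continuous family of loops in the unit circle
interpolating between a constant loop and a loop of winding number `-2`. -/
lemma no_such_H (H : ℝ → ℝ → ℂ) (hc : Continuous fun p : ℝ × ℝ => H p.1 p.2)
    (habs : ∀ s t, ‖H s t‖ = 1)
    (hloop : ∀ s, H s 1 = H s 0)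
    (h1 : ∀ t, H 1 t = H 1 0 * Complex.exp ((-(4 * Real.pi * t) : ℝ) * Complex.I))
    (h0 : ∀ t, H 0 t = H 0 0) : False := by
  have hH0 : ∀ σ t, H σ t ≠ 0 := by
    intro σ t h0'
    have := habs σ t
    rw [h0'] at this
    simp at this
  have hexp : ∀ z : ℂ, ‖z‖ = 1 → Complex.exp (z.arg * Complex.I) = z := by
    intro z hz
    have := Complex.norm_mul_exp_arg_mul_I z
    rw [hz] at this
    simpa using this
  have hHcont : ∀ σ : ℝ, Continuous fun t => H σ t := by
    intro σ
    exact hc.comp (Continuous.prodMk continuous_const continuous_id)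
  -- the lifting property
  set P : ℝ → Prop := fun s => ∃ Θ : ℝ → ℝ, ContinuousOn Θ (Set.Icc 0 1) ∧
      (∀ t ∈ Set.Icc (0:ℝ) 1, H s t = Complex.exp (Θ t * Complex.I)) ∧ Θ 1 = Θ 0 with hP
  -- base case
  have hbase : P 0 := by
    refine ⟨fun _ => (H 0 0).arg, continuousOn_const, fun t ht => ?_, rfl⟩
    rw [h0 t]
    exact (hexp _ (habs 0 0)).symm
  -- propagation
  have hprop : ∀ s s' : ℝ, (∀ t ∈ Set.Icc (0:ℝ) 1, ‖H s' t - H s t‖ < 2) →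
      P s → P s' := by
    intro s s' hd ⟨Θ, hΘc, hΘ, hΘl⟩
    set R : ℝ → ℂ := fun t => H s' t / H s t with hR
    have hRabs : ∀ t, ‖R t‖ = 1 := by
      intro t
      rw [hR]
      simp [map_div₀, habs]
    have hslit : ∀ t ∈ Set.Icc (0:ℝ) 1, R t ∈ Complex.slitPlane := by
      intro t ht
      by_contra hmem
      rw [Complex.mem_slitPlane_iff] at hmem
      push_neg at hmem
      obtain ⟨hre, him⟩ := hmem
      have hre2 : (R t).re ^ 2 = 1 := by
        have h1' := hRabs t
        rw [Complex.norm_def, Complex.normSq_apply, him] at h1'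
        have := Real.sqrt_eq_one.mp (by simpa using h1')
        linear_combination this
      have hRm1 : R t = -1 := by
        apply Complex.ext
        · simp only [Complex.neg_re, Complex.one_re]
          nlinarith
        · simp [him]
      have hHm : H s' t = -H s t := by
        have := congrArg (· * H s t) hRm1
        simpa [hR, div_mul_cancel₀ _ (hH0 s t)] using this
      have hd' := hd t ht
      rw [hHm, show -H s t - H s t = -(2 * H s t) by ring] at hd'
      simp [habs] at hd'
    refine ⟨fun t => Θ t + (R t).arg, ?_, ?_, ?_⟩
    · apply hΘc.add
      have hRc : ContinuousOn R (Set.Icc 0 1) :=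
        ((hHcont s').continuousOn.div (hHcont s).continuousOn (fun t _ => hH0 s t))
      intro t ht
      exact (Complex.continuousAt_arg (hslit t ht)).comp_continuousWithinAt (hRc t ht)
    · intro t ht
      rw [Complex.ofReal_add, add_mul, Complex.exp_add, ← hΘ t ht, hexp (R t) (hRabs t), hR]
      rw [mul_comm, div_mul_cancel₀ _ (hH0 s t)]
    · have hR10 : R 1 = R 0 := by rw [hR]; simp [hloop s, hloop s']
      show Θ 1 + (R 1).arg = Θ 0 + (R 0).arg
      rw [hΘl, hR10]
  -- uniform continuity gives a step size
  have hK : IsCompact (Set.Icc (0:ℝ) 1 ×ˢ Set.Icc (0:ℝ) 1) := isCompact_Icc.prod isCompact_Icc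
  have hUC := hK.uniformContinuousOn_of_continuous hc.continuousOn
  rw [Metric.uniformContinuousOn_iff] at hUC
  obtain ⟨δ, hδpos, hδ⟩ := hUC 2 (by norm_num)
  obtain ⟨n, hn⟩ := exists_nat_one_div_lt hδpos
  have hstep : ∀ k : ℕ, k ≤ n + 1 → P (k / (n+1) : ℝ) := by
    intro k
    induction k with
    | zero => intro _; simpa using hbase
    | succ m ih =>
      intro hm
      have hm' : (m : ℝ) ≤ n := by exact_mod_cast Nat.lt_succ_iff.mp hm
      have hn1 : (0:ℝ) < n + 1 := by positivity
      apply hprop ((m : ℝ) / (n+1)) ((m+1 : ℕ) / (n+1) : ℝ)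
      · intro t ht
        have hmem1 : ((m : ℝ) / (n+1), t) ∈ Set.Icc (0:ℝ) 1 ×ˢ Set.Icc (0:ℝ) 1 := by
          refine ⟨⟨by positivity, ?_⟩, ht⟩
          rw [div_le_one hn1]; linarith
        have hmem2 : (((m+1 : ℕ) : ℝ) / (n+1), t) ∈ Set.Icc (0:ℝ) 1 ×ˢ Set.Icc (0:ℝ) 1 := by
          refine ⟨⟨by positivity, ?_⟩, ht⟩
          rw [div_le_one hn1]
          push_cast
          linarith
        have hdist : dist (((m+1 : ℕ) : ℝ) / (n+1), t) (((m : ℝ) / (n+1), t)) < δ := by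
          rw [Prod.dist_eq]
          simp only [dist_self]
          have : dist (((m+1 : ℕ) : ℝ) / (n+1)) ((m : ℝ) / (n+1)) = 1 / (n+1) := by
            rw [Real.dist_eq, div_sub_div_same]
            push_cast
            rw [show (m : ℝ) + 1 - m = 1 by ring]
            rw [abs_of_pos (by positivity)]
          rw [max_lt_iff]
          exact ⟨by rw [this]; exact hn, hδpos⟩
        have := hδ _ hmem2 _ hmem1 hdist
        rwa [Complex.dist_eq] at this
      · exact ih (le_trans (Nat.le_succ m) hm)
  have hP1 : P 1 := by
    have := hstep (n+1) le_rfl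
    have heq : (((n+1 : ℕ) : ℝ) / (n+1)) = 1 := by
      push_cast
      field_simp
    rwa [heq] at this
  -- contradiction from P 1
  obtain ⟨Θ, hΘc, hΘ, hΘl⟩ := hP1
  set D : ℝ → ℝ := fun t => Θ t - Θ 0 + 4 * Real.pi * t with hD
  have hDexp : ∀ t ∈ Set.Icc (0:ℝ) 1, Complex.exp ((D t : ℝ) * Complex.I) = 1 := by
    intro t ht
    have e1 : H 1 t = Complex.exp ((Θ t : ℝ) * Complex.I) := hΘ t ht
    have e0 : H 1 0 = Complex.exp ((Θ 0 : ℝ) * Complex.I) :=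
      hΘ 0 ⟨le_refl 0, zero_le_one⟩
    rw [h1 t, e0] at e1
    have hsplit : ((Θ t : ℝ) : ℂ) * Complex.I
        = (Θ 0 : ℝ) * Complex.I + ((-(4 * Real.pi * t) : ℝ) : ℂ) * Complex.I
          + ((D t : ℝ) : ℂ) * Complex.I := by
      rw [hD]
      push_cast
      ring
    rw [hsplit, Complex.exp_add, Complex.exp_add] at e1
    have e2 : Complex.exp ((Θ 0 : ℝ) * Complex.I)
          * Complex.exp (((-(4 * Real.pi * t) : ℝ) : ℂ) * Complex.I)
          * Complex.exp (((D t : ℝ) : ℂ) * Complex.I)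
        = Complex.exp ((Θ 0 : ℝ) * Complex.I)
          * Complex.exp (((-(4 * Real.pi * t) : ℝ) : ℂ) * Complex.I) * 1 := by
      rw [mul_one]
      exact e1.symm
    have hne : Complex.exp ((Θ 0 : ℝ) * Complex.I)
        * Complex.exp (((-(4 * Real.pi * t) : ℝ) : ℂ) * Complex.I) ≠ 0 :=
      mul_ne_zero (Complex.exp_ne_zero _) (Complex.exp_ne_zero _)
    exact mul_left_cancel₀ hne e2
  have hint : ∀ t ∈ Set.Icc (0:ℝ) 1, ∃ m : ℤ, D t = m * (2 * Real.pi) := by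
    intro t ht
    obtain ⟨m, hm⟩ := Complex.exp_eq_one_iff.mp (hDexp t ht)
    refine ⟨m, ?_⟩
    have := congrArg Complex.im hm
    simpa using this
  have hDc : ContinuousOn D (Set.Icc 0 1) := by
    apply ContinuousOn.add
    · exact hΘc.sub continuousOn_const
    · exact (continuous_const.mul continuous_id).continuousOn
  have hD0 : D 0 = 0 := by
    show Θ 0 - Θ 0 + 4 * Real.pi * 0 = 0
    ring
  have hD1 : D 1 = 4 * Real.pi := by
    show Θ 1 - Θ 0 + 4 * Real.pi * 1 = 4 * Real.pi
    rw [hΘl]; ring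
  have hpi : Real.pi ∈ Set.Icc (D 0) (D 1) := by
    rw [hD0, hD1]
    constructor
    · exact le_of_lt Real.pi_pos
    · nlinarith [Real.pi_pos]
  obtain ⟨t, ht, hDt⟩ := intermediate_value_Icc zero_le_one hDc hpi
  obtain ⟨m, hm⟩ := hint t ht
  rw [hDt] at hm
  have hmul : ((2 * m - 1 : ℝ)) * Real.pi = 0 := by linear_combination -hm
  have hm2 : (2 * m - 1 : ℝ) = 0 := by
    rcases mul_eq_zero.mp hmul with h | h
    · exact h
    · exact absurd h Real.pi_ne_zero
  have : (2 * m - 1 : ℤ) = 0 := by exact_mod_cast hm2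
  omega

/-- There is no continuous map `M : SO(3) → SO(3)` selecting, for each `g`, a representative
`M g ∈ Ω(g)` of its orbit under rotations about the Y-axis, constantly on each orbit. -/
theorem no_continuous_orbit_representative :
    ¬ ∃ M : SO3 → SO3, Continuous M ∧ (∀ g : SO3, M g ∈ orbit g) ∧
      (∀ (g h : SO3), h ∈ RY → M (h * g) = M g) := by
  rintro ⟨M, hMc, horb, hinv⟩
  -- the clamping function
  set cl : ℝ → ℝ := fun s => max 0 (min 1 s) with hcl
  have hcl0 : ∀ s, 0 ≤ cl s := fun s => le_max_left 0 _
  have hcl1 : ∀ s, cl s ≤ 1 := fun s => max_le zero_le_one (min_le_left 1 s)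
  have hclc : Continuous cl := continuous_const.max (continuous_const.min continuous_id)
  set e : ℝ → ℂ := fun t => Complex.exp ((2 * Real.pi * t : ℝ) * Complex.I) with he
  have heabs : ∀ t, Complex.normSq (e t) = 1 := by
    intro t
    have h1 : ‖e t‖ = 1 := by
      rw [he]
      exact Complex.norm_exp_ofReal_mul_I _
    rw [Complex.normSq_eq_norm_sq, h1]
    norm_num
  have hsq : ∀ s, (1 - cl s ^ 2) ≥ 0 := by
    intro s
    nlinarith [hcl0 s, hcl1 s]
  have hmem : ∀ s t, Complex.normSq ((cl s : ℂ) * e t)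
      + Complex.normSq ((Real.sqrt (1 - cl s ^ 2) : ℝ) : ℂ) = 1 := by
    intro s t
    rw [Complex.normSq_mul, heabs, Complex.normSq_ofReal, Complex.normSq_ofReal,
      Real.mul_self_sqrt (hsq s)]
    ring
  set zmap : ℝ → ℝ → Sph := fun s t =>
    ⟨((cl s : ℂ) * e t, ((Real.sqrt (1 - cl s ^ 2) : ℝ) : ℂ)), hmem s t⟩ with hzmap
  set H : ℝ → ℝ → ℂ := fun s t => fS M (zmap s t) with hH
  apply no_such_H H
  · -- continuity
    apply (fS_cont M hMc).comp
    apply Continuous.subtype_mk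
    apply Continuous.prodMk
    · exact (Complex.continuous_ofReal.comp (hclc.comp continuous_fst)).mul
        (Complex.continuous_exp.comp
          ((Complex.continuous_ofReal.comp
            ((continuous_const.mul continuous_snd))).mul continuous_const))
    · exact Complex.continuous_ofReal.comp
        (Real.continuous_sqrt.comp
          (continuous_const.sub ((hclc.comp continuous_fst).pow 2)))
  · intro s t
    exact fS_abs M horb _
  · -- loops
    intro s
    show fS M (zmap s 1) = fS M (zmap s 0)
    apply congrArg
    apply Subtype.ext
    apply Prod.ext
    · show (cl s : ℂ) * e 1 = (cl s : ℂ) * e 0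
      have : e 1 = e 0 := by
        rw [he]
        show Complex.exp _ = Complex.exp _
        rw [show ((2 * Real.pi * 1 : ℝ) : ℂ) * Complex.I = 2 * (Real.pi : ℂ) * Complex.I by
          push_cast; ring]
        rw [show ((2 * Real.pi * 0 : ℝ) : ℂ) * Complex.I = 0 by push_cast; ring]
        rw [Complex.exp_two_pi_mul_I, Complex.exp_zero]
      rw [this]
    · rfl
  · -- winding at s = 1
    intro t
    have hcl1' : cl 1 = 1 := by
      rw [hcl]; norm_num
    have key := fS_equiv M horb hinv (zmap 1 0) (zmap 1 t) (e t) (heabs t) ?_ ?_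
    · show fS M (zmap 1 t) = fS M (zmap 1 0) * Complex.exp ((-(4 * Real.pi * t) : ℝ) * Complex.I)
      rw [key]
      congr 1
      have hconj : (starRingEnd ℂ) (e t) = Complex.exp ((-(2 * Real.pi * t) : ℝ) * Complex.I) := by
        rw [he, ← Complex.exp_conj]
        congr 1
        rw [RingHom.map_mul, Complex.conj_ofReal, Complex.conj_I]
        push_cast
        ring
      rw [hconj, pow_two, ← Complex.exp_add]
      congr 1
      push_cast
      ring
    · show (cl 1 : ℂ) * e t = e t * ((cl 1 : ℂ) * e 0)
      rw [hcl1']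
      have he0 : e 0 = 1 := by rw [he]; norm_num
      rw [he0]
      push_cast
      ring
    · show ((Real.sqrt (1 - cl 1 ^ 2) : ℝ) : ℂ) = e t * ((Real.sqrt (1 - cl 1 ^ 2) : ℝ) : ℂ)
      rw [hcl1']
      norm_num
  · -- constant at s = 0
    intro t
    show fS M (zmap 0 t) = fS M (zmap 0 0)
    apply congrArg
    apply Subtype.ext
    apply Prod.ext
    · show (cl 0 : ℂ) * e t = (cl 0 : ℂ) * e 0
      have : cl 0 = 0 := by rw [hcl]; norm_num
      rw [this]
      push_cast
      ring
    · rfl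
end
end

section
/- There is no continuous map s : S² → SO(3) such that s(q)·q = p for every q ∈ S², i.e., there is no continuous choice, for each point q of the unit sphere, of a rotation carrying q to the north pole p. -/
open Matrix RealInnerProductSpace

noncomputable section

section WindingAux
open Real Set

noncomputable section

def tau (t : ℝ) : ℝ := max 0 (min t (2*π))

lemma tau_continuous : Continuous tau := continuous_const.max (continuous_id.min continuous_const)

lemma tau_mem : ∀ t, tau t ∈ Icc 0 (2*π) := by
  intro t
  refine ⟨le_max_left _ _, ?_⟩
  have h1 : min t (2*π) ≤ 2*π := min_le_right _ _
  have h2 : (0:ℝ) ≤ 2*π := by positivity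
  exact max_le h2 h1

lemma tau_eq {t : ℝ} (ht : t ∈ Icc 0 (2*π)) : tau t = t := by
  obtain ⟨h1, h2⟩ := ht
  simp [tau, min_eq_left h2, max_eq_right h1]

lemma unit_sq {u : ℂ} (hu : ‖u‖ = 1) : u.re^2 + u.im^2 = 1 := by
  have := Complex.sq_norm u
  rw [hu] at this
  rw [Complex.normSq_apply] at this
  nlinarith [this]

lemma re_mul_conj_pos {u v : ℂ} (hu : ‖u‖ = 1) (hv : ‖v‖ = 1)
    (h : dist u v < 1) : 0 < (u * (starRingEnd ℂ) v).re := by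
  have hu' := unit_sq hu
  have hv' := unit_sq hv
  have hd : ‖u - v‖ < 1 := by rwa [Complex.dist_eq] at h
  have hd2 : (u-v).re^2 + (u-v).im^2 < 1 := by
    have h0 : (0:ℝ) ≤ ‖u-v‖ := norm_nonneg _
    have := Complex.sq_norm (u - v)
    rw [Complex.normSq_apply] at this
    nlinarith
  simp only [Complex.sub_re, Complex.sub_im] at hd2
  simp only [Complex.mul_re, Complex.conj_re, Complex.conj_im]
  nlinarith

lemma exp_arg_unit {z : ℂ} (hz : ‖z‖ = 1) : Complex.exp (z.arg * Complex.I) = z := by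
  have := Complex.norm_mul_exp_arg_mul_I z
  rw [hz] at this
  simpa using this

lemma slit_of_re_pos {z : ℂ} (h : 0 < z.re) : z ∈ Complex.slitPlane := Or.inl h

end


noncomputable section

lemma exists_lift (f : ℝ → ℂ) (hf : Continuous f) (hu : ∀ t, ‖f t‖ = 1) :
    ∃ g : ℝ → ℝ, Continuous g ∧ ∀ t ∈ Icc 0 (2*π), f t = Complex.exp (g t * Complex.I) := by
  have hK : IsCompact (Icc (0:ℝ) (2*π)) := isCompact_Icc
  have huc : UniformContinuousOn f (Icc 0 (2*π)) :=
    hK.uniformContinuousOn_of_continuous hf.continuousOn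
  rw [Metric.uniformContinuousOn_iff] at huc
  obtain ⟨δ, hδ, hδ'⟩ := huc 1 one_pos
  obtain ⟨N, hN⟩ := exists_nat_gt (2*π/δ)
  have hNpos : 0 < (N:ℝ) := lt_of_le_of_lt (by positivity) hN
  set pts : ℝ → ℕ → ℝ := fun t k => (k : ℝ) * tau t / N with hpts
  have hmem : ∀ t k, k ≤ N → pts t k ∈ Icc 0 (2*π) := by
    intro t k hk
    have h1 := tau_mem t
    constructor
    · have : (0:ℝ) ≤ (k:ℝ) * tau t := mul_nonneg (by positivity) h1.1
      positivity
    · rw [div_le_iff₀ hNpos]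
      calc (k:ℝ) * tau t ≤ (N:ℝ) * (2*π) := by
            apply mul_le_mul (by exact_mod_cast hk) h1.2 h1.1 (le_of_lt hNpos)
        _ = 2*π*N := by ring
  have hdist : ∀ t k, dist (pts t (k+1)) (pts t k) < δ := by
    intro t k
    have h1 := tau_mem t
    have heq : pts t (k+1) - pts t k = tau t / N := by
      simp only [hpts]; push_cast; ring
    have h2 : dist (pts t (k+1)) (pts t k) = tau t / N := by
      rw [Real.dist_eq, heq, abs_of_nonneg (div_nonneg h1.1 (le_of_lt hNpos))]
    rw [h2]
    have h3 : tau t / N ≤ 2*π / N := by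
      gcongr
      exact h1.2
    have h4 : 2*π/N < δ := by
      rw [div_lt_iff₀ hNpos]
      have := (div_lt_iff₀ hδ).mp hN
      linarith [this]
    linarith
  -- the incremental factors
  set z : ℝ → ℕ → ℂ := fun t k => f (pts t (k+1)) * (starRingEnd ℂ) (f (pts t k)) with hz
  have hzre : ∀ t k, k < N → 0 < (z t k).re := by
    intro t k hk
    apply re_mul_conj_pos (hu _) (hu _)
    exact hδ' _ (hmem t (k+1) hk) _ (hmem t k (le_of_lt hk)) (hdist t k)
  have hzabs : ∀ t k, ‖z t k‖ = 1 := by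
    intro t k
    simp [hz, _root_.map_mul, hu]
  set g : ℝ → ℝ := fun t => (f 0).arg + ∑ k ∈ Finset.range N, (z t k).arg with hg
  have hptscont : ∀ k : ℕ, Continuous (fun t => pts t k) := by
    intro k
    simp only [hpts]
    exact (continuous_const.mul tau_continuous).div_const _
  have hzcont : ∀ k, Continuous (fun t => z t k) := by
    intro k
    exact (hf.comp (hptscont (k+1))).mul (continuous_star.comp (hf.comp (hptscont k)))
  have hgcont : Continuous g := by
    apply continuous_const.add
    apply continuous_finset_sum
    intro k hk
    rw [Finset.mem_range] at hk
    rw [continuous_iff_continuousAt]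
    intro t
    show ContinuousAt (Complex.arg ∘ fun s => z s k) t
    exact ContinuousAt.comp (Complex.continuousAt_arg (slit_of_re_pos (hzre t k hk)))
      ((hzcont k).continuousAt)
  refine ⟨g, hgcont, ?_⟩
  intro t ht
  have key : ∀ n, n ≤ N → Complex.exp ((∑ k ∈ Finset.range n, ((z t k).arg : ℂ)) * Complex.I)
      = f (pts t n) * (starRingEnd ℂ) (f (pts t 0)) := by
    intro n hn
    induction n with
    | zero =>
      simp [Complex.mul_conj, Complex.normSq_eq_norm_sq, hu]
    | succ m ih =>
      have hm : m ≤ N := le_of_lt (Nat.lt_of_succ_le hn)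
      have hmlt : m < N := Nat.lt_of_succ_le hn
      rw [Finset.sum_range_succ, add_mul, Complex.exp_add, ih hm, exp_arg_unit (hzabs t m)]
      have habs : f (pts t m) * (starRingEnd ℂ) (f (pts t m)) = 1 := by
        rw [Complex.mul_conj, Complex.normSq_eq_norm_sq, hu]
        norm_num
      simp only [hz]
      linear_combination (f (pts t (m+1)) * (starRingEnd ℂ) (f (pts t 0))) * habs
  have h0 : pts t 0 = 0 := by simp [hpts]
  have hNt : pts t N = t := by
    simp only [hpts]
    rw [tau_eq ht]
    field_simp
  have hmain : Complex.exp ((g t : ℂ) * Complex.I) = f 0 * (f t * (starRingEnd ℂ) (f 0)) := by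
    have hkey := key N le_rfl
    rw [h0, hNt] at hkey
    simp only [hg]
    push_cast
    rw [add_mul, Complex.exp_add, exp_arg_unit (hu 0), hkey]
  rw [hmain]
  have habs0 : f 0 * (starRingEnd ℂ) (f 0) = 1 := by
    rw [Complex.mul_conj, Complex.normSq_eq_norm_sq, hu]
    norm_num
  linear_combination (-(f t)) * habs0
end

noncomputable section

def IsLift (f : ℝ → ℂ) (g : ℝ → ℝ) : Prop :=
  Continuous g ∧ ∀ t ∈ Icc 0 (2*π), f t = Complex.exp (g t * Complex.I)

lemma lift_diff_int {f : ℝ → ℂ} {g₁ g₂ : ℝ → ℝ} (h₁ : IsLift f g₁) (h₂ : IsLift f g₂) :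
    ∀ t ∈ Icc 0 (2*π), ∃ n : ℤ, g₁ t - g₂ t = n * (2*π) := by
  intro t ht
  have he : Complex.exp (g₁ t * Complex.I) = Complex.exp (g₂ t * Complex.I) := by
    rw [← h₁.2 t ht, ← h₂.2 t ht]
  rw [Complex.exp_eq_exp_iff_exists_int] at he
  obtain ⟨n, hn⟩ := he
  refine ⟨n, ?_⟩
  have h2 : ((g₁ t : ℂ)) = (g₂ t : ℂ) + n * (2*π) := by
    apply mul_right_cancel₀ Complex.I_ne_zero
    rw [hn]; ring
  have h3 : g₁ t = g₂ t + n*(2*π) := by exact_mod_cast h2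
  linarith

lemma lift_wind_unique {f : ℝ → ℂ} {g₁ g₂ : ℝ → ℝ} (h₁ : IsLift f g₁) (h₂ : IsLift f g₂) :
    g₁ (2*π) - g₁ 0 = g₂ (2*π) - g₂ 0 := by
  have h2π : (0:ℝ) ≤ 2*π := by positivity
  set k : ℝ → ℝ := fun t => (g₁ t - g₂ t) / (2*π) with hk
  have hkc : ContinuousOn k (Icc 0 (2*π)) :=
    (((h₁.1.sub h₂.1).div_const _)).continuousOn
  have hint : ∀ t ∈ Icc 0 (2*π), ∃ n : ℤ, k t = n := by
    intro t ht
    obtain ⟨n, hn⟩ := lift_diff_int h₁ h₂ t ht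
    exact ⟨n, by rw [hk]; field_simp [hn]; linear_combination hn⟩
  obtain ⟨n₀, hn₀⟩ := hint 0 (by constructor <;> [rfl; positivity])
  obtain ⟨n₁, hn₁⟩ := hint (2*π) (by constructor <;> [positivity; rfl])
  have hkey : k 0 = k (2*π) := by
    rw [hn₀, hn₁]
    by_contra hne
    have hne' : n₀ ≠ n₁ := fun h => hne (by rw [h])
    -- IVT to find a non-integer value
    rcases lt_or_gt_of_ne hne' with hlt | hlt
    · have hy : ((n₀:ℝ) + 1/2) ∈ Icc (k 0) (k (2*π)) := by
        rw [hn₀, hn₁]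
        constructor
        · linarith
        · have : (n₀:ℝ) + 1 ≤ n₁ := by exact_mod_cast hlt
          linarith
      obtain ⟨t, ht, hval⟩ := intermediate_value_Icc h2π hkc hy
      obtain ⟨m, hm⟩ := hint t ht
      rw [hm] at hval
      have : (2*m : ℝ) = 2*n₀ + 1 := by push_cast; linarith
      have : (2*m : ℤ) = 2*n₀ + 1 := by exact_mod_cast this
      omega
    · have hy : ((n₁:ℝ) + 1/2) ∈ Icc (k (2*π)) (k 0) := by
        rw [hn₀, hn₁]
        constructor
        · linarith
        · have : (n₁:ℝ) + 1 ≤ n₀ := by exact_mod_cast hlt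
          linarith
      obtain ⟨t, ht, hval⟩ := intermediate_value_Icc' h2π hkc hy
      obtain ⟨m, hm⟩ := hint t ht
      rw [hm] at hval
      have : (2*m : ℝ) = 2*n₁ + 1 := by push_cast; linarith
      have : (2*m : ℤ) = 2*n₁ + 1 := by exact_mod_cast this
      omega
  have hπ : (2*π) ≠ 0 := by positivity
  have := hkey
  rw [hk] at this
  simp only at this
  field_simp at this
  linarith

open Classical in
def wind (f : ℝ → ℂ) : ℝ :=
  if h : ∃ g, IsLift f g then h.choose (2*π) - h.choose 0 else 0

lemma wind_eq {f : ℝ → ℂ} {g : ℝ → ℝ} (hg : IsLift f g) : wind f = g (2*π) - g 0 := by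
  rw [wind]
  rw [dif_pos (⟨g, hg⟩ : ∃ g, IsLift f g)]
  exact lift_wind_unique (Exists.choose_spec (⟨g, hg⟩ : ∃ g, IsLift f g)) hg

end

noncomputable section

lemma wind_fwd {σ : ℂ} (hσ : ‖σ‖ = 1) :
    wind (fun t => σ * Complex.exp (t * Complex.I)) = 2*π := by
  have hlift : IsLift (fun t => σ * Complex.exp (t * Complex.I)) (fun t => σ.arg + t) := by
    refine ⟨continuous_const.add continuous_id, ?_⟩
    intro t _
    push_cast
    rw [add_mul, Complex.exp_add, exp_arg_unit hσ]
  rw [wind_eq hlift]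
  ring

lemma wind_bwd {σ : ℂ} (hσ : ‖σ‖ = 1) :
    wind (fun t => σ * Complex.exp (-t * Complex.I)) = -(2*π) := by
  have hlift : IsLift (fun t => σ * Complex.exp (-t * Complex.I)) (fun t => σ.arg - t) := by
    refine ⟨continuous_const.sub continuous_id, ?_⟩
    intro t _
    push_cast
    rw [sub_mul, Complex.exp_sub, exp_arg_unit hσ, neg_mul, Complex.exp_neg]
    ring
  rw [wind_eq hlift]
  ring

lemma wind_congr {f₁ f₂ : ℝ → ℂ} (h₁c : Continuous f₁) (h₂c : Continuous f₂)
    (h₁u : ∀ t, ‖f₁ t‖ = 1) (h₂u : ∀ t, ‖f₂ t‖ = 1)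
    (hclose : ∀ t ∈ Icc 0 (2*π), dist (f₁ t) (f₂ t) < 1)
    (hper1 : f₁ (2*π) = f₁ 0) (hper2 : f₂ (2*π) = f₂ 0) :
    wind f₁ = wind f₂ := by
  obtain ⟨g₂, hg₂c, hg₂⟩ := exists_lift f₂ h₂c h₂u
  set d : ℝ → ℂ := fun t => f₁ (tau t) * (starRingEnd ℂ) (f₂ (tau t)) with hd
  have hdre : ∀ t, 0 < (d t).re := fun t =>
    re_mul_conj_pos (h₁u _) (h₂u _) (hclose _ (tau_mem t))
  have hdabs : ∀ t, ‖d t‖ = 1 := by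
    intro t; simp [hd, _root_.map_mul, h₁u, h₂u]
  have hdc : Continuous d :=
    ((h₁c.comp tau_continuous).mul (continuous_star.comp (h₂c.comp tau_continuous)))
  have hargc : Continuous (fun t => (d t).arg) := by
    rw [continuous_iff_continuousAt]
    intro t
    show ContinuousAt (Complex.arg ∘ d) t
    exact ContinuousAt.comp (Complex.continuousAt_arg (slit_of_re_pos (hdre t))) hdc.continuousAt
  have hlift1 : IsLift f₁ (fun t => g₂ t + (d t).arg) := by
    refine ⟨hg₂c.add hargc, ?_⟩
    intro t ht
    push_cast
    rw [add_mul, Complex.exp_add, ← hg₂ t ht, exp_arg_unit (hdabs t)]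
    simp only [hd, tau_eq ht]
    have habs : f₂ t * (starRingEnd ℂ) (f₂ t) = 1 := by
      rw [Complex.mul_conj, Complex.normSq_eq_norm_sq, h₂u]
      norm_num
    linear_combination (-(f₁ t)) * habs
  rw [wind_eq hlift1, wind_eq ⟨hg₂c, hg₂⟩]
  have h0 : tau 0 = 0 := tau_eq ⟨le_refl _, by positivity⟩
  have h2 : tau (2*π) = 2*π := tau_eq ⟨by positivity, le_refl _⟩
  have hdeq : d (2*π) = d 0 := by
    simp only [hd, h0, h2, hper1, hper2]
  rw [hdeq]
  ring

end

end WindingAux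

section MatAux
open Matrix Real Set

noncomputable section

def Ymat (θ : ℝ) : Matrix (Fin 3) (Fin 3) ℝ :=
  !![Real.cos θ, 0, Real.sin θ; 0, 1, 0; -Real.sin θ, 0, Real.cos θ]

def Zmat (φ : ℝ) : Matrix (Fin 3) (Fin 3) ℝ :=
  !![Real.cos φ, -Real.sin φ, 0; Real.sin φ, Real.cos φ, 0; 0, 0, 1]

lemma Ymat_zero : Ymat 0 = 1 := by
  ext i j
  fin_cases i <;> fin_cases j <;> simp [Ymat, Matrix.one_apply, Matrix.vecHead, Matrix.vecTail]

lemma Zmat_zero : Zmat 0 = 1 := by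
  ext i j
  fin_cases i <;> fin_cases j <;> simp [Zmat, Matrix.one_apply, Matrix.vecHead, Matrix.vecTail]

lemma Ymat_mul (a b : ℝ) : Ymat a * Ymat b = Ymat (a+b) := by
  ext i j
  fin_cases i <;> fin_cases j <;>
    simp [Ymat, Matrix.mul_apply, Fin.sum_univ_three, Real.cos_add, Real.sin_add] <;> ring

lemma Zmat_mul (a b : ℝ) : Zmat a * Zmat b = Zmat (a+b) := by
  ext i j
  fin_cases i <;> fin_cases j <;>
    simp [Zmat, Matrix.mul_apply, Fin.sum_univ_three, Real.cos_add, Real.sin_add] <;> ring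

lemma Ymat_transpose (θ : ℝ) : (Ymat θ)ᵀ = Ymat (-θ) := by
  ext i j
  fin_cases i <;> fin_cases j <;> simp [Ymat, Matrix.transpose_apply]

lemma Zmat_transpose (φ : ℝ) : (Zmat φ)ᵀ = Zmat (-φ) := by
  ext i j
  fin_cases i <;> fin_cases j <;> simp [Zmat, Matrix.transpose_apply]

lemma Ymat_ortho (θ : ℝ) : (Ymat θ)ᵀ * Ymat θ = 1 := by
  rw [Ymat_transpose, Ymat_mul]
  simp [Ymat_zero]

lemma Zmat_ortho (φ : ℝ) : (Zmat φ)ᵀ * Zmat φ = 1 := by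
  rw [Zmat_transpose, Zmat_mul]
  simp [Zmat_zero]

lemma Ymat_det (θ : ℝ) : (Ymat θ).det = 1 := by
  simp [Ymat, Matrix.det_fin_three]
  nlinarith [sin_sq_add_cos_sq θ]

lemma Zmat_det (φ : ℝ) : (Zmat φ).det = 1 := by
  simp [Zmat, Matrix.det_fin_three]
  nlinarith [sin_sq_add_cos_sq φ]

lemma Ymat_two_pi : Ymat (2*π) = Ymat 0 := by
  ext i j
  fin_cases i <;> fin_cases j <;> simp [Ymat, Real.cos_two_pi, Real.sin_two_pi, Matrix.vecHead, Matrix.vecTail]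

lemma YZ_comm (θ : ℝ) : Ymat θ * Zmat π = Zmat π * Ymat (-θ) := by
  ext i j
  fin_cases i <;> fin_cases j <;>
    simp [Ymat, Zmat, Matrix.mul_apply, Fin.sum_univ_three, Real.cos_pi, Real.sin_pi, Matrix.vecHead, Matrix.vecTail, Function.comp]

end

noncomputable section

/-- Structure of an element of SO(3) fixing (0,1,0). -/
lemma stab {B : Matrix (Fin 3) (Fin 3) ℝ} (hB : Bᵀ * B = 1) (hdet : B.det = 1)
    (hfix : B.mulVec ![0,1,0] = ![0,1,0]) :
    B 0 1 = 0 ∧ B 1 0 = 0 ∧ B 1 1 = 1 ∧ B 1 2 = 0 ∧ B 2 1 = 0 ∧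
    B 2 0 = -(B 0 2) ∧ B 2 2 = B 0 0 ∧ (B 0 0)^2 + (B 0 2)^2 = 1 := by
  have hcol : ∀ i, B i 1 = ![(0:ℝ),1,0] i := by
    intro i
    have := congrFun hfix i
    simpa [Matrix.mulVec, dotProduct, Fin.sum_univ_three] using this
  have hc0 : B 0 1 = 0 := by simpa using hcol 0
  have hc1 : B 1 1 = 1 := by simpa using hcol 1
  have hc2 : B 2 1 = 0 := by simpa using hcol 2
  have hBB : B * Bᵀ = 1 := mul_eq_one_comm.mp hB
  have hrow : ∀ i j, ∑ k, B i k * B j k = (1 : Matrix (Fin 3) (Fin 3) ℝ) i j := by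
    intro i j
    have := congrFun (congrFun hBB i) j
    simpa [Matrix.mul_apply, Matrix.transpose_apply] using this
  have h00 := hrow 0 0
  have h11 := hrow 1 1
  have h02 := hrow 0 2
  simp [Fin.sum_univ_three, Matrix.one_apply, hc0, hc1, hc2] at h00 h11 h02
  -- row 1 has only middle entry
  have h10 : B 1 0 = 0 := by nlinarith [h11, sq_nonneg (B 1 0), sq_nonneg (B 1 2)]
  have h12 : B 1 2 = 0 := by nlinarith [h11, sq_nonneg (B 1 0), sq_nonneg (B 1 2)]
  have hdet' : B 0 0 * B 2 2 - B 0 2 * B 2 0 = 1 := by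
    rw [Matrix.det_fin_three] at hdet
    rw [hc0, hc1, hc2, h10, h12] at hdet
    linarith [hdet]
  refine ⟨hc0, h10, hc1, h12, hc2, ?_, ?_, ?_⟩
  · linear_combination (B 0 0) * h02 - (B 0 2) * hdet' - (B 2 0) * h00
  · linear_combination (B 0 2) * h02 + (B 0 0) * hdet' - (B 2 2) * h00
  · linarith [h00]

end

noncomputable section

def IsStab (B : Matrix (Fin 3) (Fin 3) ℝ) : Prop :=
  B 0 1 = 0 ∧ B 1 0 = 0 ∧ B 1 1 = 1 ∧ B 1 2 = 0 ∧ B 2 1 = 0 ∧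
  B 2 0 = -(B 0 2) ∧ B 2 2 = B 0 0 ∧ (B 0 0)^2 + (B 0 2)^2 = 1

lemma stab' {B : Matrix (Fin 3) (Fin 3) ℝ} (hB : Bᵀ * B = 1) (hdet : B.det = 1)
    (hfix : B.mulVec ![0,1,0] = ![0,1,0]) : IsStab B := stab hB hdet hfix

def cval (B : Matrix (Fin 3) (Fin 3) ℝ) : ℂ := (B 0 0 : ℝ) + (B 0 2 : ℝ) * Complex.I

lemma cval_abs {B : Matrix (Fin 3) (Fin 3) ℝ} (h : IsStab B) : ‖cval B‖ = 1 := by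
  have h1 := h.2.2.2.2.2.2.2
  rw [cval, Complex.norm_def, Complex.normSq_apply]
  simp only [Complex.add_re, Complex.ofReal_re, Complex.mul_re, Complex.I_re, Complex.ofReal_im,
    Complex.I_im, Complex.add_im, Complex.mul_im]
  rw [show ((B 0 0 + (B 0 2 * 0 - 0 * 1)) * (B 0 0 + (B 0 2 * 0 - 0 * 1)) +
        (0 + (B 0 2 * 1 + 0 * 0)) * (0 + (B 0 2 * 1 + 0 * 0))) = 1 from by nlinarith [h1]]
  exact Real.sqrt_one

lemma IsStab_Ymat (θ : ℝ) : IsStab (Ymat θ) := by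
  refine ⟨?_, ?_, ?_, ?_, ?_, ?_, ?_, ?_⟩ <;> simp [Ymat] <;>
    nlinarith [sin_sq_add_cos_sq θ]

lemma cval_mul {B₁ B₂ : Matrix (Fin 3) (Fin 3) ℝ} (h₁ : IsStab B₁) (h₂ : IsStab B₂) :
    cval (B₁ * B₂) = cval B₁ * cval B₂ := by
  have e1 : (B₁ * B₂) 0 0 = B₁ 0 0 * B₂ 0 0 - B₁ 0 2 * B₂ 0 2 := by
    rw [Matrix.mul_apply, Fin.sum_univ_three, h₁.1, h₂.2.2.2.2.2.1]
    ring
  have e2 : (B₁ * B₂) 0 2 = B₁ 0 0 * B₂ 0 2 + B₁ 0 2 * B₂ 2 2 := by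
    rw [Matrix.mul_apply, Fin.sum_univ_three, h₁.1]
    ring
  rw [cval, cval, cval, e1, e2, h₂.2.2.2.2.2.2.1]
  push_cast
  linear_combination (-((B₁ 0 2 : ℂ) * (B₂ 0 2 : ℂ))) * Complex.I_sq

lemma cval_Ymat (θ : ℝ) : cval (Ymat θ) = Complex.exp (θ * Complex.I) := by
  rw [Complex.exp_mul_I, cval]
  simp [Ymat, Complex.ofReal_cos, Complex.ofReal_sin]

end

end MatAux

section GlueAux
open Matrix Real Set

noncomputable section

def matSO (g : SO3) : Matrix (Fin 3) (Fin 3) ℝ :=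
  ((g : Matrix.unitaryGroup (Fin 3) ℝ) : Matrix (Fin 3) (Fin 3) ℝ)

lemma matSO_ortho (g : SO3) : (matSO g)ᵀ * matSO g = 1 := by
  have h := (g : Matrix.unitaryGroup (Fin 3) ℝ).2
  rw [Unitary.mem_iff] at h
  have h1 : star (matSO g) * matSO g = 1 := h.1
  rwa [Matrix.star_eq_conjTranspose,
    show ((matSO g)ᴴ : Matrix (Fin 3) (Fin 3) ℝ) = (matSO g)ᵀ from by
      ext i j; simp [Matrix.conjTranspose_apply]] at h1

lemma matSO_det (g : SO3) : (matSO g).det = 1 := g.2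

lemma act_eq (g : SO3) (v : E3) (w : Fin 3 → ℝ)
    (h : act g v = (EuclideanSpace.equiv (Fin 3) ℝ).symm w) :
    (matSO g).mulVec (fun i => v i) = w := by
  have := congrArg (EuclideanSpace.equiv (Fin 3) ℝ) h
  simp [act] at this; exact this

lemma matSO_continuous : Continuous matSO :=
  continuous_subtype_val.comp continuous_subtype_val

def qvv (φ θ : ℝ) : Fin 3 → ℝ :=
  ![-(Real.sin φ * Real.cos θ), Real.cos φ, Real.sin φ * Real.sin θ]

lemma qvv_norm (φ θ : ℝ) : ‖(EuclideanSpace.equiv (Fin 3) ℝ).symm (qvv φ θ)‖ = 1 := by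
  rw [EuclideanSpace.norm_eq]
  have : ∀ i, ((EuclideanSpace.equiv (Fin 3) ℝ).symm (qvv φ θ) : EuclideanSpace ℝ (Fin 3)) i
      = qvv φ θ i := fun i => rfl
  simp only [this]
  rw [show (∑ i, ‖qvv φ θ i‖^2) = 1 from by
    simp [Fin.sum_univ_three, qvv, sq_abs]
    nlinarith [sin_sq_add_cos_sq φ, sin_sq_add_cos_sq θ]]
  exact Real.sqrt_one

def qpt (φ θ : ℝ) : S2 := ⟨(EuclideanSpace.equiv (Fin 3) ℝ).symm (qvv φ θ), qvv_norm φ θ⟩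

def Amat (φ θ : ℝ) : Matrix (Fin 3) (Fin 3) ℝ := Ymat θ * Zmat φ

lemma Amat_mulVec (φ θ : ℝ) : (Amat φ θ).mulVec ![0,1,0] = qvv φ θ := by
  funext i
  rw [Amat, ← Matrix.mulVec_mulVec]
  fin_cases i <;>
    simp [Ymat, Zmat, qvv, Matrix.mulVec, dotProduct, Fin.sum_univ_three] <;> ring

lemma Amat_ortho (φ θ : ℝ) : (Amat φ θ)ᵀ * Amat φ θ = 1 := by
  rw [Amat, Matrix.transpose_mul]
  calc (Zmat φ)ᵀ * (Ymat θ)ᵀ * (Ymat θ * Zmat φ)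
      = (Zmat φ)ᵀ * ((Ymat θ)ᵀ * Ymat θ) * Zmat φ := by
        simp only [Matrix.mul_assoc]
    _ = 1 := by rw [Ymat_ortho, Matrix.mul_one, Zmat_ortho]

lemma Amat_det (φ θ : ℝ) : (Amat φ θ).det = 1 := by
  rw [Amat, Matrix.det_mul, Ymat_det, Zmat_det, mul_one]

lemma qvv_two_pi (φ : ℝ) : qvv φ (2*π) = qvv φ 0 := by
  funext i
  fin_cases i <;> simp [qvv, Real.cos_two_pi, Real.sin_two_pi]

lemma qvv_zero (θ : ℝ) : qvv 0 θ = ![0,1,0] := by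
  funext i
  fin_cases i <;> simp [qvv]

lemma qvv_pi (θ : ℝ) : qvv π θ = ![0,-1,0] := by
  funext i
  fin_cases i <;> simp [qvv, Real.cos_pi, Real.sin_pi]

lemma Zpi_mulVec : (Zmat π).mulVec ![0,1,0] = ![0,-1,0] := by
  funext i
  fin_cases i <;>
    simp [Zmat, Matrix.mulVec, dotProduct, Fin.sum_univ_three, Real.cos_pi, Real.sin_pi]

lemma qpt_cont : Continuous (fun x : ℝ × ℝ => qpt x.1 x.2) := by
  apply Continuous.subtype_mk
  apply ((EuclideanSpace.equiv (Fin 3) ℝ).symm : (Fin 3 → ℝ) ≃L[ℝ] E3).continuous.comp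
  apply continuous_pi
  intro i
  fin_cases i <;> simp only [qvv] <;>
    simp <;> fun_prop

end
end GlueAux

lemma qpt_coe_apply (φ θ : ℝ) : (fun i => ((qpt φ θ : E3)) i) = qvv φ θ := rfl

lemma section_mulVec {s : S2 → SO3} (hsec : ∀ q : S2, act (s q) (q : E3) = pY) (φ θ : ℝ) :
    (matSO (s (qpt φ θ))).mulVec (qvv φ θ) = ![0,1,0] := by
  have h := act_eq (s (qpt φ θ)) (qpt φ θ : E3) ![0,1,0] (hsec (qpt φ θ))
  rwa [qpt_coe_apply] at h

set_option maxHeartbeats 1000000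

section HomotopyAux
open Real Set

lemma wind_homotopy (cmf : ℝ → ℝ → ℂ) (hcont : Continuous (fun x : ℝ × ℝ => cmf x.1 x.2))
    (habs : ∀ φ t, ‖cmf φ t‖ = 1) (hper : ∀ φ, cmf φ (2*π) = cmf φ 0) (φ₁ : ℝ) :
    wind (fun t => cmf φ₁ t) = wind (fun t => cmf 0 t) := by
  have hlc : ∀ φ₀ : ℝ, ∃ δ > 0, ∀ φ, |φ - φ₀| < δ →
      wind (fun t => cmf φ t) = wind (fun t => cmf φ₀ t) := by
    intro φ₀
    set U : Set (ℝ × ℝ) := {x | dist (cmf x.1 x.2) (cmf φ₀ x.2) < 1} with hU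
    have hUopen : IsOpen U := by
      have : Continuous (fun x : ℝ × ℝ => dist (cmf x.1 x.2) (cmf φ₀ x.2)) :=
        Continuous.dist hcont (hcont.comp (continuous_const.prodMk continuous_snd))
      exact isOpen_lt this continuous_const
    have hsub : ({φ₀} : Set ℝ) ×ˢ (Icc 0 (2*π)) ⊆ U := by
      rintro ⟨a, b⟩ ⟨ha, _⟩
      simp only [Set.mem_singleton_iff] at ha
      subst ha
      simp [hU]
    obtain ⟨u, v, huo, hvo, hu, hv, huv⟩ :=
      generalized_tube_lemma isCompact_singleton isCompact_Icc hUopen hsub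
    obtain ⟨δ, hδpos, hδ⟩ := Metric.isOpen_iff.mp huo φ₀ (hu rfl)
    refine ⟨δ, hδpos, ?_⟩
    intro φ hφ
    have hmemu : φ ∈ u := hδ (by rwa [Metric.mem_ball, Real.dist_eq])
    apply wind_congr (hcont.comp (continuous_const.prodMk continuous_id))
      (hcont.comp (continuous_const.prodMk continuous_id))
      (fun t => habs φ t) (fun t => habs φ₀ t) ?_ (hper φ) (hper φ₀)
    intro t ht
    exact huv (Set.mk_mem_prod hmemu (hv ht))
  set S : Set ℝ := {φ | wind (fun t => cmf φ t) = wind (fun t => cmf 0 t)} with hSdef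
  have hSopen : IsOpen S := by
    apply Metric.isOpen_iff.mpr
    intro φ hφ
    obtain ⟨δ, hδpos, hδ⟩ := hlc φ
    refine ⟨δ, hδpos, ?_⟩
    intro ψ hψ
    rw [Metric.mem_ball, Real.dist_eq] at hψ
    have := hδ ψ hψ
    simp only [hSdef, Set.mem_setOf_eq] at hφ ⊢
    rw [this, hφ]
  have hScopen : IsOpen Sᶜ := by
    apply Metric.isOpen_iff.mpr
    intro φ hφ
    obtain ⟨δ, hδpos, hδ⟩ := hlc φ
    refine ⟨δ, hδpos, ?_⟩
    intro ψ hψ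
    rw [Metric.mem_ball, Real.dist_eq] at hψ
    have := hδ ψ hψ
    simp only [hSdef, Set.mem_compl_iff, Set.mem_setOf_eq] at hφ ⊢
    rw [this]
    exact hφ
  have hSclopen : IsClopen S := ⟨⟨hScopen⟩, hSopen⟩
  have hSuniv : S = Set.univ := hSclopen.eq_univ ⟨0, by simp [hSdef]⟩
  have : φ₁ ∈ S := hSuniv ▸ Set.mem_univ φ₁
  simpa [hSdef] using this

end HomotopyAux

/-- There is no continuous choice, for each point `q` of the unit sphere, of a rotation
carrying `q` to the north pole `p = (0,1,0)`. -/
theorem no_continuous_rotation_to_north_pole :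
    ¬ ∃ s : S2 → SO3, Continuous s ∧ ∀ q : S2, act (s q) (q : E3) = pY := by
  open Real Set Matrix in
  rintro ⟨s, hs, hsec⟩
  -- translate the section property to matrix language
  have hsec' : ∀ φ θ : ℝ, (matSO (s (qpt φ θ))).mulVec (qvv φ θ) = ![0,1,0] :=
    section_mulVec hsec
  set Bm : ℝ → ℝ → Matrix (Fin 3) (Fin 3) ℝ :=
    fun φ θ => matSO (s (qpt φ θ)) * Amat φ θ with hBm
  set cm : ℝ → ℝ → ℂ := fun φ θ => cval (Bm φ θ) with hcm
  have hBfix : ∀ φ θ, (Bm φ θ).mulVec ![0,1,0] = ![0,1,0] := by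
    intro φ θ
    rw [hBm]
    simp only
    rw [← Matrix.mulVec_mulVec, Amat_mulVec]
    exact hsec' φ θ
  have hBortho : ∀ φ θ, (Bm φ θ)ᵀ * Bm φ θ = 1 := by
    intro φ θ
    rw [hBm]
    simp only [Matrix.transpose_mul]
    calc (Amat φ θ)ᵀ * (matSO (s (qpt φ θ)))ᵀ * (matSO (s (qpt φ θ)) * Amat φ θ)
        = (Amat φ θ)ᵀ * ((matSO (s (qpt φ θ)))ᵀ * matSO (s (qpt φ θ))) * Amat φ θ := by
          simp only [Matrix.mul_assoc]
      _ = 1 := by rw [matSO_ortho, Matrix.mul_one, Amat_ortho]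
  have hBdet : ∀ φ θ, (Bm φ θ).det = 1 := by
    intro φ θ
    rw [hBm]
    simp only [Matrix.det_mul, matSO_det, Amat_det, one_mul]
  have hBstab : ∀ φ θ, IsStab (Bm φ θ) := fun φ θ =>
    stab' (hBortho φ θ) (hBdet φ θ) (hBfix φ θ)
  have habs : ∀ φ θ, ‖cm φ θ‖ = 1 := fun φ θ => cval_abs (hBstab φ θ)
  -- periodicity in θ
  have hper : ∀ φ, cm φ (2*π) = cm φ 0 := by
    intro φ
    have hq : qpt φ (2*π) = qpt φ 0 := by
      apply Subtype.ext
      show (EuclideanSpace.equiv (Fin 3) ℝ).symm (qvv φ (2*π))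
          = (EuclideanSpace.equiv (Fin 3) ℝ).symm (qvv φ 0)
      rw [qvv_two_pi]
    have hA : Amat φ (2*π) = Amat φ 0 := by rw [Amat, Amat, Ymat_two_pi]
    rw [hcm]
    simp only
    rw [hBm]
    simp only [hq, hA]
  -- continuity
  have hcont : Continuous (fun x : ℝ × ℝ => cm x.1 x.2) := by
    have hAc : Continuous (fun x : ℝ × ℝ => Amat x.1 x.2) := by
      apply continuous_matrix
      intro i j
      fin_cases i <;> fin_cases j <;>
        simp [Amat, Ymat, Zmat, Matrix.mul_apply, Fin.sum_univ_three,
          Matrix.vecHead, Matrix.vecTail] <;> fun_prop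
    have hSc : Continuous (fun x : ℝ × ℝ => matSO (s (qpt x.1 x.2))) :=
      matSO_continuous.comp (hs.comp qpt_cont)
    have hBc : Continuous (fun x : ℝ × ℝ => Bm x.1 x.2) := hSc.matrix_mul hAc
    have h00 : Continuous (fun x : ℝ × ℝ => Bm x.1 x.2 0 0) :=
      (continuous_apply (0 : Fin 3)).comp ((continuous_apply (0 : Fin 3)).comp hBc)
    have h02 : Continuous (fun x : ℝ × ℝ => Bm x.1 x.2 0 2) :=
      (continuous_apply (2 : Fin 3)).comp ((continuous_apply (0 : Fin 3)).comp hBc)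
    rw [hcm]
    simp only [cval]
    exact (Complex.continuous_ofReal.comp h00).add
      ((Complex.continuous_ofReal.comp h02).mul continuous_const)
  -- value at φ = 0
  have hq0 : ∀ θ, qpt 0 θ = qpt 0 0 := by
    intro θ
    apply Subtype.ext
    show (EuclideanSpace.equiv (Fin 3) ℝ).symm (qvv 0 θ)
        = (EuclideanSpace.equiv (Fin 3) ℝ).symm (qvv 0 0)
    rw [qvv_zero, qvv_zero]
  have hS0stab : IsStab (matSO (s (qpt 0 0))) := by
    apply stab' (matSO_ortho _) (matSO_det _)
    have := hsec' 0 0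
    rwa [qvv_zero] at this
  have hc0 : ∀ θ, cm 0 θ = cval (matSO (s (qpt 0 0))) * Complex.exp (θ * Complex.I) := by
    intro θ
    rw [hcm]
    simp only
    rw [hBm]
    simp only [hq0 θ]
    rw [show Amat 0 θ = Ymat θ from by rw [Amat, Zmat_zero, Matrix.mul_one]]
    rw [cval_mul hS0stab (IsStab_Ymat θ), cval_Ymat]
  -- value at φ = π
  have hqπ : ∀ θ, qpt π θ = qpt π 0 := by
    intro θ
    apply Subtype.ext
    show (EuclideanSpace.equiv (Fin 3) ℝ).symm (qvv π θ)
        = (EuclideanSpace.equiv (Fin 3) ℝ).symm (qvv π 0)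
    rw [qvv_pi, qvv_pi]
  have hNstab : IsStab (matSO (s (qpt π 0)) * Zmat π) := by
    apply stab'
    · calc (matSO (s (qpt π 0)) * Zmat π)ᵀ * (matSO (s (qpt π 0)) * Zmat π)
          = (Zmat π)ᵀ * ((matSO (s (qpt π 0)))ᵀ * matSO (s (qpt π 0))) * Zmat π := by
            simp only [Matrix.transpose_mul, Matrix.mul_assoc]
        _ = 1 := by rw [matSO_ortho, Matrix.mul_one, Zmat_ortho]
    · rw [Matrix.det_mul, matSO_det, Zmat_det, one_mul]
    · rw [← Matrix.mulVec_mulVec, Zpi_mulVec]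
      have := hsec' π 0
      rwa [qvv_pi] at this
  have hcπ : ∀ θ, cm π θ
      = cval (matSO (s (qpt π 0)) * Zmat π) * Complex.exp (-θ * Complex.I) := by
    intro θ
    rw [hcm]
    simp only
    rw [hBm]
    simp only [hqπ θ]
    rw [show Amat π θ = Zmat π * Ymat (-θ) from by rw [Amat, YZ_comm]]
    rw [← Matrix.mul_assoc, cval_mul hNstab (IsStab_Ymat (-θ)), cval_Ymat]
    push_cast
    ring_nf
  -- winding numbers at the two ends
  have hW0 : wind (fun t => cm 0 t) = 2*π := by
    rw [show (fun t => cm 0 t)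
        = (fun t : ℝ => cval (matSO (s (qpt 0 0))) * Complex.exp ((t:ℂ) * Complex.I)) from
      funext fun t => hc0 t]
    exact wind_fwd (cval_abs hS0stab)
  have hWπ : wind (fun t => cm π t) = -(2*π) := by
    rw [show (fun t => cm π t)
        = (fun t : ℝ => cval (matSO (s (qpt π 0)) * Zmat π) * Complex.exp (-(t:ℂ) * Complex.I)) from
      funext fun t => hcπ t]
    exact wind_bwd (cval_abs hNstab)
  have hmain := wind_homotopy (fun φ θ => cm φ θ) hcont habs hper π
  rw [hW0, hWπ] at hmain
  have : π > 0 := Real.pi_pos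
  linarith
end
end

section
/- Let M : SO(3) → SO(3) satisfy M(g) ∈ Ω(g) and M(h·g) = M(g) for all g ∈ SO(3) and h ∈ R_Y. Then there exists a unique map V : S² → ℝ³ such that V(g⁻¹·p) = (M(g))⁻¹·t for every g ∈ SO(3); this V satisfies ‖V(q)‖ = 1 and ⟨q, V(q)⟩ = 0 for every q ∈ S² (so V is a unit tangent vector field on the sphere), and V is continuous whenever M is continuous. -/
open Matrix RealInnerProductSpace

noncomputable section

open Matrix RealInnerProductSpace in
section
def m3 (g : SO3) : Matrix (Fin 3) (Fin 3) ℝ :=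
  ((g : Matrix.unitaryGroup (Fin 3) ℝ) : Matrix (Fin 3) (Fin 3) ℝ)

lemma m3_mul (g h : SO3) : m3 (g * h) = m3 g * m3 h := rfl

lemma m3_one : m3 1 = 1 := rfl

lemma m3_inv (g : SO3) : m3 g⁻¹ = (m3 g)ᵀ := by
  have : m3 g⁻¹ = star (m3 g) := rfl
  rw [this, Matrix.star_eq_conjTranspose]
  ext i j
  simp [Matrix.conjTranspose_apply]

lemma m3_mul_tm3 (g : SO3) : m3 g * (m3 g)ᵀ = 1 := by
  rw [← m3_inv, ← m3_mul, mul_inv_cancel, m3_one]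

lemma tm3_mul_m3 (g : SO3) : (m3 g)ᵀ * m3 g = 1 := by
  rw [← m3_inv, ← m3_mul, inv_mul_cancel, m3_one]

lemma act_apply (g : SO3) (v : E3) (i : Fin 3) : act g v i = (m3 g).mulVec v i := rfl

lemma act_mul (g h : SO3) (v : E3) : act (g * h) v = act g (act h v) := by
  ext i
  show ((m3 g * m3 h) *ᵥ v) i = (m3 g *ᵥ ((m3 h) *ᵥ v)) i
  rw [← Matrix.mulVec_mulVec]

lemma act_one (v : E3) : act 1 v = v := by
  ext i
  simp [act_apply, m3_one]

lemma act_inv_act (g : SO3) (v : E3) : act g⁻¹ (act g v) = v := by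
  rw [← act_mul, inv_mul_cancel, act_one]

lemma act_act_inv (g : SO3) (v : E3) : act g (act g⁻¹ v) = v := by
  rw [← act_mul, mul_inv_cancel, act_one]

lemma inner_act (g : SO3) (x y : E3) : ⟪act g x, act g y⟫ = ⟪x, y⟫ := by
  simp only [PiLp.inner_apply, RCLike.inner_apply, starRingEnd_apply, star_trivial]
  show (m3 g *ᵥ y) ⬝ᵥ (m3 g *ᵥ x) = ∑ i, y i * x i
  rw [Matrix.dotProduct_mulVec]
  have h1 : (m3 g *ᵥ (y : Fin 3 → ℝ)) ᵥ* m3 g = y := by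
    rw [← Matrix.mulVec_transpose, Matrix.mulVec_mulVec, tm3_mul_m3, Matrix.one_mulVec]
  rw [h1]
  rfl

lemma norm_act (g : SO3) (x : E3) : ‖act g x‖ = ‖x‖ := by
  have := inner_act g x x
  rw [real_inner_self_eq_norm_sq, real_inner_self_eq_norm_sq] at this
  nlinarith [norm_nonneg (act g x), norm_nonneg x]
end
open Matrix RealInnerProductSpace in
section

lemma unitary_of_basis (b : OrthonormalBasis (Fin 3) ℝ E3) :
    (Matrix.of fun i j => b j i) ∈ Matrix.unitaryGroup (Fin 3) ℝ := by
  rw [Matrix.mem_unitaryGroup_iff']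
  ext j k
  have horth := b.orthonormal
  rw [orthonormal_iff_ite] at horth
  have := horth j k
  simp only [PiLp.inner_apply, RCLike.inner_apply, starRingEnd_apply, star_trivial] at this
  simp only [Matrix.mul_apply, Matrix.star_apply, Matrix.of_apply, star_trivial,
    Matrix.one_apply]
  rw [← this]
  exact Finset.sum_congr rfl fun _ _ => mul_comm _ _

end
open Matrix RealInnerProductSpace in
section
lemma act_mk (B : Matrix (Fin 3) (Fin 3) ℝ) (hB : B ∈ Matrix.unitaryGroup (Fin 3) ℝ)
    (hdet : B.det = 1) (q : E3) (hcol : ∀ i, B i 1 = q i) :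
    ∃ g : SO3, act g pY = q := by
  refine ⟨⟨⟨B, hB⟩, hdet⟩, ?_⟩
  ext i
  show (B *ᵥ ![(0:ℝ),1,0]) i = q i
  simp [Matrix.mulVec, dotProduct, Fin.sum_univ_three, hcol i, Matrix.vecHead, Matrix.vecTail]

lemma exists_act_pY' (q : E3) (hq : ‖q‖ = 1) : ∃ g : SO3, act g pY = q := by
  have hv : Orthonormal ℝ (Set.restrict ({1} : Set (Fin 3)) (fun _ : Fin 3 => q)) := by
    refine ⟨fun i => hq, fun i j hij => absurd (Subtype.ext ?_) hij⟩
    have hi := i.2; have hj := j.2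
    simp only [Set.mem_singleton_iff] at hi hj
    rw [hi, hj]
  obtain ⟨b, hb⟩ := hv.exists_orthonormalBasis_extension_of_card_eq (by simp)
  have hb1 : b 1 = q := hb 1 rfl
  set A : Matrix (Fin 3) (Fin 3) ℝ := Matrix.of fun i j => b j i with hA
  have hAu : A ∈ Matrix.unitaryGroup (Fin 3) ℝ := unitary_of_basis b
  have hdet2 : A.det * A.det = 1 := by
    have h1 : star A * A = 1 := (Matrix.mem_unitaryGroup_iff'.mp hAu)
    have := congrArg Matrix.det h1
    rwa [Matrix.det_mul, Matrix.star_eq_conjTranspose, Matrix.det_conjTranspose,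
      star_trivial, Matrix.det_one] at this
  rcases mul_self_eq_one_iff.mp hdet2 with h1 | h1
  · exact act_mk A hAu h1 q (fun i => by simp [hA, hb1])
  · set D : Matrix (Fin 3) (Fin 3) ℝ := Matrix.diagonal ![-1, 1, 1] with hD
    have hDu : D ∈ Matrix.unitaryGroup (Fin 3) ℝ := by
      rw [Matrix.mem_unitaryGroup_iff']
      rw [hD, Matrix.star_eq_conjTranspose, Matrix.diagonal_conjTranspose]
      rw [Matrix.diagonal_mul_diagonal]
      ext i j
      fin_cases i <;> fin_cases j <;> simp [Matrix.diagonal, Matrix.one_apply]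
    have hdetD : D.det = -1 := by
      rw [hD, Matrix.det_diagonal, Fin.prod_univ_three]; norm_num; rfl
    refine act_mk (A * D) (mul_mem hAu hDu) (by rw [Matrix.det_mul, h1, hdetD]; ring) q
      (fun i => ?_)
    rw [Matrix.mul_apply, Fin.sum_univ_three]
    simp [hD, hA, Matrix.diagonal, hb1]
end
open Matrix RealInnerProductSpace Topology in
section
lemma continuous_m3 : Continuous m3 :=
  continuous_subtype_val.comp continuous_subtype_val

lemma isEmbedding_m3 : IsEmbedding m3 :=
  IsEmbedding.subtypeVal.comp IsEmbedding.subtypeVal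

lemma continuous_act_const (v : E3) : Continuous fun g : SO3 => act g v := by
  refine (EuclideanSpace.equiv (Fin 3) ℝ).symm.continuous.comp ?_
  exact (continuous_m3.matrix_mulVec continuous_const)

lemma continuous_so3_inv : Continuous fun g : SO3 => g⁻¹ := by
  rw [isEmbedding_m3.continuous_iff]
  have : (m3 ∘ fun g : SO3 => g⁻¹) = fun g => (m3 g)ᵀ := by
    funext g; exact m3_inv g
  rw [this]
  exact continuous_m3.matrix_transpose

lemma range_m3 : Set.range m3 =
    {A : Matrix (Fin 3) (Fin 3) ℝ | A ∈ Matrix.unitaryGroup (Fin 3) ℝ ∧ A.det = 1} := by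
  ext A
  constructor
  · rintro ⟨g, rfl⟩
    exact ⟨(g : Matrix.unitaryGroup (Fin 3) ℝ).2, g.2⟩
  · rintro ⟨h1, h2⟩
    exact ⟨⟨⟨A, h1⟩, h2⟩, rfl⟩

lemma abs_entry_le (A : Matrix (Fin 3) (Fin 3) ℝ) (hA : A ∈ Matrix.unitaryGroup (Fin 3) ℝ)
    (i j : Fin 3) : A i j ∈ Set.Icc (-1 : ℝ) 1 := by
  have h1 : A * star A = 1 := Matrix.mem_unitaryGroup_iff.mp hA
  have h2 : ∑ k, A i k * A i k = 1 := by
    have := congrFun (congrFun h1 i) i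
    simpa [Matrix.mul_apply, Matrix.star_apply, Matrix.one_apply] using this
  have h3 : A i j * A i j ≤ 1 := by
    rw [← h2]
    exact Finset.single_le_sum (f := fun k => A i k * A i k)
      (fun k _ => mul_self_nonneg _) (Finset.mem_univ j)
  constructor <;> nlinarith

instance : CompactSpace SO3 := by
  rw [← isCompact_univ_iff]
  rw [isEmbedding_m3.isCompact_iff, Set.image_univ, range_m3]
  have hsub : {A : Matrix (Fin 3) (Fin 3) ℝ | A ∈ Matrix.unitaryGroup (Fin 3) ℝ ∧ A.det = 1}
      ⊆ Set.pi Set.univ fun _ : Fin 3 => Set.pi Set.univ fun _ : Fin 3 => Set.Icc (-1:ℝ) 1 := by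
    rintro A ⟨h1, _⟩ i _ j _
    exact abs_entry_le A h1 i j
  have hK : IsCompact (Set.pi Set.univ fun _ : Fin 3 =>
      Set.pi Set.univ fun _ : Fin 3 => Set.Icc (-1:ℝ) 1) :=
    isCompact_univ_pi fun _ => isCompact_univ_pi fun _ => isCompact_Icc
  refine hK.of_isClosed_subset ?_ hsub
  have hc1 : IsClosed {A : Matrix (Fin 3) (Fin 3) ℝ | A ∈ Matrix.unitaryGroup (Fin 3) ℝ} := by
    have : {A : Matrix (Fin 3) (Fin 3) ℝ | A ∈ Matrix.unitaryGroup (Fin 3) ℝ}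
        = (fun A : Matrix (Fin 3) (Fin 3) ℝ => A * star A) ⁻¹' {1} := by
      ext A; simp [Matrix.mem_unitaryGroup_iff]
    rw [this]
    exact IsClosed.preimage (continuous_id.matrix_mul continuous_star) isClosed_singleton
  have hc2 : IsClosed {A : Matrix (Fin 3) (Fin 3) ℝ | A.det = 1} :=
    IsClosed.preimage continuous_id.matrix_det isClosed_singleton
  exact hc1.inter hc2
end
open Matrix RealInnerProductSpace Topology in
section
lemma norm_pY : ‖pY‖ = 1 := by
  rw [EuclideanSpace.norm_eq]
  have h0 : pY 0 = 0 := rfl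
  have h1 : pY 1 = 1 := rfl
  have h2 : pY 2 = 0 := rfl
  rw [Fin.sum_univ_three, h0, h1, h2]
  norm_num

lemma norm_tX : ‖tX‖ = 1 := by
  rw [EuclideanSpace.norm_eq]
  have h0 : tX 0 = 1 := rfl
  have h1 : tX 1 = 0 := rfl
  have h2 : tX 2 = 0 := rfl
  rw [Fin.sum_univ_three, h0, h1, h2]
  norm_num

lemma inner_pY_tX : ⟪pY, tX⟫ = (0 : ℝ) := by
  simp only [PiLp.inner_apply, RCLike.inner_apply, starRingEnd_apply, star_trivial]
  have h0 : pY 0 = 0 := rfl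
  have h1 : tX 1 = 0 := rfl
  have h2 : pY 2 = 0 := rfl
  rw [Fin.sum_univ_three, h0, h1, h2]
  ring

instance : T2Space S2 := inferInstanceAs (T2Space {q : E3 // ‖q‖ = 1})

theorem selection_induces_unit_tangent_field' (M : SO3 → SO3)
    (hM1 : ∀ g : SO3, M g ∈ orbit g)
    (hM2 : ∀ (g h : SO3), h ∈ RY → M (h * g) = M g) :
    ∃ V : S2 → E3,
      (∀ (g : SO3) (q : S2), (q : E3) = act g⁻¹ pY → V q = act (M g)⁻¹ tX) ∧
      (∀ W : S2 → E3,
        (∀ (g : SO3) (q : S2), (q : E3) = act g⁻¹ pY → W q = act (M g)⁻¹ tX) → W = V) ∧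
      (∀ q : S2, ‖V q‖ = 1 ∧ ⟪(q : E3), V q⟫ = 0) ∧
      (Continuous M → Continuous V) := by
  have hsel : ∀ q : S2, ∃ g : SO3, (q : E3) = act g⁻¹ pY := by
    intro q
    obtain ⟨g, hg⟩ := exists_act_pY' (q : E3) q.2
    exact ⟨g⁻¹, by rw [inv_inv, hg]⟩
  choose sel hsel' using hsel
  have key : ∀ (g : SO3) (q : S2), (q : E3) = act g⁻¹ pY →
      act (M (sel q))⁻¹ tX = act (M g)⁻¹ tX := by
    intro g q hq
    have hmem : (sel q * g⁻¹) ∈ RY := by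
      show act (sel q * g⁻¹) pY = pY
      rw [act_mul, ← hq, hsel' q, act_act_inv]
    have hMeq : M (sel q) = M g := by
      have h2 := hM2 g (sel q * g⁻¹) hmem
      rwa [inv_mul_cancel_right] at h2
    rw [hMeq]
  refine ⟨fun q => act (M (sel q))⁻¹ tX, fun g q hq => key g q hq, ?_, ?_, ?_⟩
  · intro W hW
    funext q
    rw [hW (sel q) q (hsel' q)]
  · intro q
    obtain ⟨h, hhRY, hMg⟩ := hM1 (sel q)
    have hform : act (M (sel q))⁻¹ tX = act (sel q)⁻¹ (act h⁻¹ tX) := by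
      rw [hMg, _root_.mul_inv_rev, act_mul]
    have hfix : act h⁻¹ pY = pY := by
      conv_lhs => rw [← hhRY]
      rw [act_inv_act]
    constructor
    · show ‖act (M (sel q))⁻¹ tX‖ = 1
      rw [hform, norm_act, norm_act, norm_tX]
    · show ⟪(q : E3), act (M (sel q))⁻¹ tX⟫ = 0
      rw [hform, hsel' q, inner_act]
      rw [← hfix, inner_act, inner_pY_tX]
  · intro hMc
    set π : SO3 → S2 := fun g => ⟨act g⁻¹ pY, by rw [norm_act, norm_pY]⟩ with hπ
    have hcont : Continuous π := by
      apply Continuous.subtype_mk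
      exact (continuous_act_const pY).comp continuous_so3_inv
    have hsurj : Function.Surjective π := fun q => ⟨sel q, Subtype.ext (hsel' q).symm⟩
    have hquot : IsQuotientMap π := IsQuotientMap.of_surjective_continuous hsurj hcont
    rw [hquot.continuous_iff]
    have hcomp : ((fun q => act (M (sel q))⁻¹ tX) ∘ π) = fun g => act (M g)⁻¹ tX := by
      funext g
      exact key g (π g) rfl
    rw [hcomp]
    exact (continuous_act_const tX).comp (continuous_so3_inv.comp hMc)
end

/-- Given a representative-selection map `M` constant on orbits, there is a unique map
`V : S² → ℝ³` with `V (g⁻¹ p) = (M g)⁻¹ t` for all `g`; it is a unit tangent vector field,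
and is continuous whenever `M` is. -/
theorem selection_induces_unit_tangent_field (M : SO3 → SO3)
    (hM1 : ∀ g : SO3, M g ∈ orbit g)
    (hM2 : ∀ (g h : SO3), h ∈ RY → M (h * g) = M g) :
    ∃ V : S2 → E3,
      (∀ (g : SO3) (q : S2), (q : E3) = act g⁻¹ pY → V q = act (M g)⁻¹ tX) ∧
      (∀ W : S2 → E3,
        (∀ (g : SO3) (q : S2), (q : E3) = act g⁻¹ pY → W q = act (M g)⁻¹ tX) → W = V) ∧
      (∀ q : S2, ‖V q‖ = 1 ∧ ⟪(q : E3), V q⟫ = 0) ∧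
      (Continuous M → Continuous V) :=
  selection_induces_unit_tangent_field' M hM1 hM2
end
end
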